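/- Let H be a torsion-free group that is δ-hyperbolic with respect to a finite generating set S. There exist functions f₁: ℕ → ℕ and f₂: ℕ → ℕ, computable from δ and ♯S, such that for every nontrivial g ∈ H and all natural numbers s, t > 0, one has ‖g^{s+t}‖ − f₁(|g|) ≤ ‖g^s‖ + ‖g^t‖ ≤ ‖g^{s+t}‖ + f₂(|g|). -/

import Mathlib

variable {G : Type*} [Group G]

/-- Word length of `g` with respect to a generating set `S`: the least number of
letters from `S ∪ S⁻¹` whose product is `g`. -/
noncomputable def wlen (S : Set G) (g : G) : ℕ :=
  sInf {n : ℕ | ∃ L : List G, (∀ x ∈ L, x ∈ S ∨ x⁻¹ ∈ S) ∧ L.length = n ∧ L.prod = g}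

/-- A discrete geodesic from `a` to `b` in the Cayley graph of `G` w.r.t. `S`:
the sequence of vertices visited by a geodesic path. -/
def IsDGeodesic (S : Set G) (a b : G) (p : ℕ → G) : Prop :=
  p 0 = a ∧ p (wlen S (a⁻¹ * b)) = b ∧
    ∀ i ≤ wlen S (a⁻¹ * b), ∀ j ≤ wlen S (a⁻¹ * b),
      wlen S ((p i)⁻¹ * p j) = Nat.dist i j

/-- `G` is `δ`-hyperbolic with respect to `S`: every geodesic triangle in the
Cayley graph `Γ(G,S)` is `δ`-thin, rendered on the vertex set. -/
def GroupHyperbolic (S : Set G) (δ : ℝ) : Prop :=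
  ∀ a b c : G, ∀ p q : ℕ → G, IsDGeodesic S a b p → IsDGeodesic S a c q →
    ∀ i : ℕ,
      (i : ℝ) ≤ ((wlen S (a⁻¹ * b) : ℝ) + (wlen S (a⁻¹ * c) : ℝ)
          - (wlen S (b⁻¹ * c) : ℝ)) / 2 →
      (wlen S ((p i)⁻¹ * q i) : ℝ) ≤ δ

/-- The (conjugacy/translation) norm of `g`: the minimum word length of a
conjugate of `g`; equivalently `min { d(x, gx) : x ∈ Γ(G,S) }`. -/
noncomputable def gnorm (S : Set G) (g : G) : ℕ :=
  sInf (Set.range fun x : G => wlen S (x⁻¹ * g * x))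

/-- A monoid is torsion-free if no nontrivial element has finite order
(the definition of `Monoid.IsTorsionFree` in the older Mathlib). -/
def Monoid.IsTorsionFree (M : Type*) [Monoid M] : Prop :=
  ∀ g : M, g ≠ 1 → ¬IsOfFinOrder g

/-!
Thinness of the triangle `y, h y, h² y`, where `y` is a point moved least by `h²`, gives the
doubling inequality `2‖h‖ ≤ ‖h²‖ + C` with `C = 2δ + 2`; iterating, `‖g^m‖ ≤ ‖g^(2^k m)‖ / 2^k + C`.
In the other direction, conjugating `g^n` to a shortest representative and using subadditivity of
word length, `‖g^N‖ / N ≤ ‖g^n‖ / n + O(1/N)`. Letting `k → ∞` yields `n‖g^m‖ ≤ m‖g^n‖ + nC` for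
all `m, n`, and the pairs `(s, s + t)`, `(t, s + t)` taken in both orders give the two inequalities
with `f₁ = ⌈C⌉` and `f₂ = 2⌈C⌉`.
-/

lemma le_of_forall_two_pow_mul_le_add {a b c : ℝ} (h : ∀ k : ℕ, 2 ^ k * a ≤ 2 ^ k * b + c) :
    a ≤ b := by
  by_contra! hab
  obtain ⟨k, hk⟩ := pow_unbounded_of_one_lt (c / (a - b)) one_lt_two
  rw [div_lt_iff₀ (sub_pos.mpr hab)] at hk
  nlinarith [h k]

lemma gnorm_le_wlen_conj (S : Set G) (g x : G) : gnorm S g ≤ wlen S (x⁻¹ * g * x) :=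
  Nat.sInf_le ⟨x, rfl⟩

lemma exists_wlen_conj_eq_gnorm (S : Set G) (g : G) : ∃ x : G, wlen S (x⁻¹ * g * x) = gnorm S g :=
  Nat.sInf_mem (Set.range_nonempty _)

def IsWord (S : Set G) (L : List G) : Prop :=
  ∀ x ∈ L, x ∈ S ∨ x⁻¹ ∈ S

section

variable {S : Set G} {δ : ℝ}

lemma IsWord.append {L M : List G} (hL : IsWord S L) (hM : IsWord S M) : IsWord S (L ++ M) := by
  intro x hx
  rcases List.mem_append.mp hx with h | h
  exacts [hL x h, hM x h]

lemma IsWord.mono {L M : List G} (hL : IsWord S L) (h : M ⊆ L) : IsWord S M :=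
  fun x hx => hL x (h hx)

lemma wlen_le_length {L : List G} (hL : IsWord S L) : wlen S L.prod ≤ L.length :=
  Nat.sInf_le ⟨L, hL, rfl, rfl⟩

lemma exists_isWord_length_eq_wlen (hS : Subgroup.closure S = ⊤) (g : G) :
    ∃ L : List G, IsWord S L ∧ L.length = wlen S g ∧ L.prod = g := by
  have hg : g ∈ Submonoid.closure (S ∪ S⁻¹) := by
    rw [← Subgroup.closure_toSubmonoid, hS]
    trivial
  obtain ⟨L, hL, hprod⟩ := Submonoid.exists_list_of_mem_closure hg
  exact Nat.sInf_mem (s := {n | ∃ L : List G, IsWord S L ∧ L.length = n ∧ L.prod = g})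
    ⟨L.length, L, hL, rfl, hprod⟩

lemma wlen_one : wlen S (1 : G) = 0 :=
  Nat.le_zero.mp (wlen_le_length (L := []) (by simp [IsWord]))

lemma wlen_mul_le (hS : Subgroup.closure S = ⊤) (a b : G) :
    wlen S (a * b) ≤ wlen S a + wlen S b := by
  obtain ⟨La, hLa, hlen_a, rfl⟩ := exists_isWord_length_eq_wlen hS a
  obtain ⟨Lb, hLb, hlen_b, rfl⟩ := exists_isWord_length_eq_wlen hS b
  simpa [hlen_a, hlen_b] using wlen_le_length (hLa.append hLb)

lemma wlen_inv_le (hS : Subgroup.closure S = ⊤) (g : G) : wlen S g⁻¹ ≤ wlen S g := by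
  obtain ⟨L, hL, hlen, rfl⟩ := exists_isWord_length_eq_wlen hS g
  have hinv : IsWord S (L.map (·⁻¹)).reverse := by
    intro x hx
    obtain ⟨y, hy, rfl⟩ := List.mem_map.mp (List.mem_reverse.mp hx)
    simpa [or_comm] using hL y hy
  simpa [← List.prod_inv_reverse, hlen] using wlen_le_length hinv

lemma wlen_inv (hS : Subgroup.closure S = ⊤) (g : G) : wlen S g⁻¹ = wlen S g :=
  le_antisymm (wlen_inv_le hS g) (by simpa using wlen_inv_le hS g⁻¹)

lemma wlen_pow_le (hS : Subgroup.closure S = ⊤) (g : G) (n : ℕ) :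
    wlen S (g ^ n) ≤ n * wlen S g := by
  induction n with
  | zero => simp [wlen_one]
  | succ n ih =>
    rw [pow_succ, Nat.succ_mul]
    exact (wlen_mul_le hS _ _).trans (Nat.add_le_add_right ih _)

lemma wlen_prod_take_inv_mul_prod_take (hS : Subgroup.closure S = ⊤) {L : List G}
    (hL : IsWord S L) (hlen : L.length = wlen S L.prod) {i j : ℕ} (hij : i ≤ j)
    (hj : j ≤ L.length) :
    wlen S ((L.take i).prod⁻¹ * (L.take j).prod) = j - i := by
  have hseg : (L.take i).prod⁻¹ * (L.take j).prod = ((L.take j).drop i).prod := by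
    rw [← (L.take j).prod_take_mul_prod_drop i, List.take_take, min_eq_left hij,
      inv_mul_cancel_left]
  have hsplit : L.prod = (L.take i).prod * ((L.take i).prod⁻¹ * (L.take j).prod) *
      (L.drop j).prod := by
    rw [mul_inv_cancel_left, List.prod_take_mul_prod_drop]
  refine le_antisymm ?_ ?_
  · rw [hseg]
    simpa [hj] using wlen_le_length (hL.mono
      ((List.drop_sublist i _).trans (List.take_sublist j _)).subset)
  · have htake := wlen_le_length (hL.mono (List.take_subset i L))
    have hdrop := wlen_le_length (hL.mono (List.drop_subset j L))
    have hmul₁ := wlen_mul_le hS ((L.take i).prod * ((L.take i).prod⁻¹ * (L.take j).prod))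
      (L.drop j).prod
    have hmul₂ := wlen_mul_le hS (L.take i).prod ((L.take i).prod⁻¹ * (L.take j).prod)
    rw [← hsplit] at hmul₁
    simp only [List.length_take, List.length_drop] at htake hdrop
    omega

lemma exists_isDGeodesic (hS : Subgroup.closure S = ⊤) (a b : G) :
    ∃ p : ℕ → G, IsDGeodesic S a b p := by
  obtain ⟨L, hL, hlen, hprod⟩ := exists_isWord_length_eq_wlen hS (a⁻¹ * b)
  have hlen' : L.length = wlen S L.prod := hprod ▸ hlen
  have hdist : ∀ i j, i ≤ j → j ≤ L.length →
      wlen S ((a * (L.take i).prod)⁻¹ * (a * (L.take j).prod)) = Nat.dist i j := by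
    intro i j hij hj
    rw [mul_inv_rev, mul_assoc, inv_mul_cancel_left,
      wlen_prod_take_inv_mul_prod_take hS hL hlen' hij hj, Nat.dist_eq_sub_of_le hij]
  refine ⟨fun i => a * (L.take i).prod, by simp, ?_, ?_⟩
  · simp [← hlen, hprod]
  · intro i hi j hj
    rw [← hlen] at hi hj
    rcases le_total i j with hij | hji
    · exact hdist i j hij hj
    · rw [← wlen_inv hS, mul_inv_rev, inv_inv, Nat.dist_comm]
      exact hdist j i hji hi

lemma IsDGeodesic.wlen_inv_mul_swap {a b : G} {p : ℕ → G} (hp : IsDGeodesic S a b p) :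
    wlen S (b⁻¹ * a) = wlen S (a⁻¹ * b) := by
  obtain ⟨h0, hn, hd⟩ := hp
  simpa [h0, hn, Nat.dist_zero_right] using hd _ le_rfl 0 (Nat.zero_le _)

lemma IsDGeodesic.reverse {a b : G} {p : ℕ → G} (hp : IsDGeodesic S a b p) :
    IsDGeodesic S b a (fun i => p (wlen S (a⁻¹ * b) - i)) := by
  have hswap := hp.wlen_inv_mul_swap
  obtain ⟨h0, hn, hd⟩ := hp
  refine ⟨by simpa using hn, ?_, ?_⟩ <;> rw [hswap]
  · simpa using h0
  · intro i hi j hj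
    rw [hd _ (Nat.sub_le _ _) _ (Nat.sub_le _ _)]
    simp only [Nat.dist]
    omega

lemma IsDGeodesic.mul_left {a b : G} {p : ℕ → G} (hp : IsDGeodesic S a b p) (c : G) :
    IsDGeodesic S (c * a) (c * b) (fun i => c * p i) := by
  obtain ⟨h0, hn, hd⟩ := hp
  simp only [IsDGeodesic, mul_inv_rev, mul_assoc, inv_mul_cancel_left]
  exact ⟨by rw [h0], by rw [hn], hd⟩

lemma gnorm_le_wlen_add_wlen (hS : Subgroup.closure S = ⊤) (h x z : G) :
    gnorm S h ≤ wlen S (x⁻¹ * (h * z)) + wlen S (z⁻¹ * x) :=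
  (gnorm_le_wlen_conj S h x).trans
    (by simpa [mul_assoc] using wlen_mul_le hS (x⁻¹ * (h * z)) (z⁻¹ * x))

lemma two_mul_gnorm_le (hS : Subgroup.closure S = ⊤) (hδ : 0 ≤ δ)
    (hyp : GroupHyperbolic S δ) (h : G) :
    2 * (gnorm S h : ℝ) ≤ gnorm S (h * h) + (2 * δ + 2) := by
  obtain ⟨y, hy⟩ := exists_wlen_conj_eq_gnorm S (h * h)
  obtain ⟨r, hr⟩ := exists_isDGeodesic hS y (h * y)
  set L := wlen S (y⁻¹ * (h * y))
  set D := wlen S (y⁻¹ * (h * h) * y)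
  -- thinness of the triangle `h y, y, h² y` near `h y`, where its sides are `r` reversed and `h r`
  have hthin : ∀ i ≤ L, 2 * i + D ≤ 2 * L → (gnorm S h : ℝ) ≤ δ + Nat.dist i (L - i) := by
    intro i hi hiD
    have hδi := hyp _ _ _ _ _ hr.reverse (hr.mul_left h) i (by
      rw [hr.wlen_inv_mul_swap, show (h * y)⁻¹ * (h * (h * y)) = y⁻¹ * (h * y) by group,
        show y⁻¹ * (h * (h * y)) = y⁻¹ * (h * h) * y by group]
      have : (2 * i + D : ℝ) ≤ 2 * L := by exact_mod_cast hiD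
      linarith)
    have hdisp := gnorm_le_wlen_add_wlen hS h (r (L - i)) (r i)
    rw [hr.2.2 i hi (L - i) (Nat.sub_le _ _)] at hdisp
    have : (gnorm S h : ℝ) ≤ wlen S ((r (L - i))⁻¹ * (h * r i)) + Nat.dist i (L - i) := by
      exact_mod_cast hdisp
    linarith
  have hDL : D ≤ 2 * L := by
    have := wlen_mul_le hS (y⁻¹ * (h * y)) (y⁻¹ * (h * y))
    rwa [show y⁻¹ * (h * y) * (y⁻¹ * (h * y)) = y⁻¹ * (h * h) * y by group, ← two_mul] at this
  have hnormL : (gnorm S h : ℝ) ≤ L := by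
    exact_mod_cast (mul_assoc y⁻¹ h y ▸ gnorm_le_wlen_conj S h y)
  set i := min (L / 2) ((2 * L - D) / 2)
  have hdist : Nat.dist i (L - i) ≤ 1 ∨ Nat.dist i (L - i) + L ≤ D + 1 := by
    simp only [Nat.dist]
    omega
  have hnorm := hthin i (by omega) (by omega)
  rw [← hy]
  rcases hdist with hdist | hdist
  · have : (Nat.dist i (L - i) : ℝ) ≤ 1 := by exact_mod_cast hdist
    have : (0 : ℝ) ≤ D := D.cast_nonneg
    linarith
  · have : (Nat.dist i (L - i) : ℝ) + L ≤ D + 1 := by exact_mod_cast hdist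
    linarith

lemma two_pow_mul_gnorm_le (hS : Subgroup.closure S = ⊤) (hδ : 0 ≤ δ)
    (hyp : GroupHyperbolic S δ) (h : G) (k : ℕ) :
    2 ^ k * (gnorm S h : ℝ) ≤ gnorm S (h ^ 2 ^ k) + (2 ^ k - 1) * (2 * δ + 2) := by
  induction k with
  | zero => simp
  | succ k ih =>
    have hsq := two_mul_gnorm_le hS hδ hyp (h ^ 2 ^ k)
    rw [← pow_add, ← two_mul, ← pow_succ'] at hsq
    rw [pow_succ]
    linarith

lemma exists_mul_gnorm_pow_le (hS : Subgroup.closure S = ⊤) (g : G) (n : ℕ) :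
    ∃ c : ℕ, ∀ N : ℕ, n * gnorm S (g ^ N) ≤ N * gnorm S (g ^ n) + c := by
  obtain ⟨x, hx⟩ := exists_wlen_conj_eq_gnorm S (g ^ n)
  set k := x⁻¹ * g * x
  have hconj : ∀ j : ℕ, x⁻¹ * g ^ j * x = k ^ j := fun j => by
    simpa using (conj_pow (a := x⁻¹) (b := g) (i := j)).symm
  refine ⟨n * n * wlen S k, fun N => ?_⟩
  have hk : wlen S (k ^ N) ≤ N / n * gnorm S (g ^ n) + N % n * wlen S k := by
    have hsplit : k ^ N = (k ^ n) ^ (N / n) * k ^ (N % n) := by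
      rw [← pow_mul, ← pow_add, Nat.div_add_mod]
    rw [hsplit, ← hx, hconj]
    exact (wlen_mul_le hS _ _).trans (add_le_add (wlen_pow_le hS _ _) (wlen_pow_le hS _ _))
  have hmod : n * (N % n) ≤ n * n := by
    rcases Nat.eq_zero_or_pos n with rfl | hn
    · simp
    · exact Nat.mul_le_mul_left n (Nat.mod_lt N hn).le
  calc n * gnorm S (g ^ N) ≤ n * (N / n * gnorm S (g ^ n) + N % n * wlen S k) := by
        gcongr
        exact (gnorm_le_wlen_conj S _ x).trans (hconj N ▸ hk)
    _ = n * (N / n) * gnorm S (g ^ n) + n * (N % n) * wlen S k := by ring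
    _ ≤ N * gnorm S (g ^ n) + n * n * wlen S k := by
        gcongr
        exact Nat.mul_div_le N n

lemma mul_gnorm_pow_le (hS : Subgroup.closure S = ⊤) (hδ : 0 ≤ δ) (hyp : GroupHyperbolic S δ)
    (g : G) (m n : ℕ) :
    (n * gnorm S (g ^ m) : ℝ) ≤ m * gnorm S (g ^ n) + n * (2 * δ + 2) := by
  obtain ⟨c, hc⟩ := exists_mul_gnorm_pow_le hS g n
  refine le_of_forall_two_pow_mul_le_add (c := c) fun k => ?_
  have hdouble := two_pow_mul_gnorm_le hS hδ hyp (g ^ m) k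
  rw [← pow_mul, mul_comm m] at hdouble
  have hpow : (n * gnorm S (g ^ (2 ^ k * m)) : ℝ) ≤ 2 ^ k * m * gnorm S (g ^ n) + c := by
    exact_mod_cast hc (2 ^ k * m)
  have hnC : (0 : ℝ) ≤ n * (2 * δ + 2) := by positivity
  nlinarith [mul_le_mul_of_nonneg_left hdouble n.cast_nonneg]

lemma gnorm_pow_add_le (hS : Subgroup.closure S = ⊤) (hδ : 0 ≤ δ) (hyp : GroupHyperbolic S δ)
    (g : G) {s t : ℕ} (hst : 0 < s + t) :
    (gnorm S (g ^ (s + t)) : ℝ) ≤ gnorm S (g ^ s) + gnorm S (g ^ t) + (2 * δ + 2) := by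
  have hs := mul_gnorm_pow_le hS hδ hyp g (s + t) s
  have ht := mul_gnorm_pow_le hS hδ hyp g (s + t) t
  have hst' : (0 : ℝ) < s + t := by exact_mod_cast hst
  push_cast at hs ht
  refine le_of_mul_le_mul_left ?_ hst'
  linarith

lemma gnorm_pow_add_gnorm_pow_le (hS : Subgroup.closure S = ⊤) (hδ : 0 ≤ δ) (hyp : GroupHyperbolic S δ)
    (g : G) {s t : ℕ} (hst : 0 < s + t) :
    (gnorm S (g ^ s) + gnorm S (g ^ t) : ℝ) ≤ gnorm S (g ^ (s + t)) + 2 * (2 * δ + 2) := by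
  have hs := mul_gnorm_pow_le hS hδ hyp g s (s + t)
  have ht := mul_gnorm_pow_le hS hδ hyp g t (s + t)
  have hst' : (0 : ℝ) < s + t := by exact_mod_cast hst
  push_cast at hs ht
  refine le_of_mul_le_mul_left ?_ hst'
  linarith

end

/-- (Corollary 2.26 of the paper.)  There are functions
`f₁ = f₁(δ, ♯S; ·)` and `f₂ = f₂(δ, ♯S; ·)` such that for every nontrivial `g`
and all `s, t > 0`: `‖g^{s+t}‖ - f₁(|g|) ≤ ‖g^s‖ + ‖g^t‖ ≤ ‖g^{s+t}‖ + f₂(|g|)`. -/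
theorem stmt15 :
    ∃ (f₁ f₂ : ℝ → ℕ → ℕ → ℕ),
      ∀ (H : Type) [Group H] (S : Set H) (δ : ℝ),
        S.Finite → Subgroup.closure S = ⊤ → 0 ≤ δ → GroupHyperbolic S δ →
        Monoid.IsTorsionFree H →
        ∀ g : H, g ≠ 1 → ∀ s t : ℕ, 0 < s → 0 < t →
          (gnorm S (g ^ (s + t)) : ℝ) - f₁ δ S.ncard (wlen S g) ≤
              (gnorm S (g ^ s) : ℝ) + (gnorm S (g ^ t) : ℝ) ∧
            (gnorm S (g ^ s) : ℝ) + (gnorm S (g ^ t) : ℝ) ≤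
              (gnorm S (g ^ (s + t)) : ℝ) + f₂ δ S.ncard (wlen S g) := by
  refine ⟨fun δ _ _ => ⌈2 * δ + 2⌉₊, fun δ _ _ => 2 * ⌈2 * δ + 2⌉₊, ?_⟩
  intro H _ S δ _ hS hδ hyp _ g _ s t hs _
  have hC : 2 * δ + 2 ≤ ⌈2 * δ + 2⌉₊ := Nat.le_ceil _
  constructor
  · linarith [gnorm_pow_add_le hS hδ hyp g (s := s) (t := t) (by omega)]
  · push_cast
    linarith [gnorm_pow_add_gnorm_pow_le hS hδ hyp g (s := s) (t := t) (by omega)]
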